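/- Assume that A is finite and that conditions (M), (O), (R), (P) hold. Let δ(C) denote the length of the lattice C, i.e., the largest n for which there is a chain c₀ < c₁ < ⋯ < cₙ in C. Then 2^{δ(C)} = ∏_{U ∈ Cm/∼} (|U| + 1); equivalently, δ(C) is the sum over all PIP equivalence classes U of the dimensions of the Boolean groups (Ū, •) regarded as vector spaces over the two-element field, each |U| + 1 = |Ū| being a power of 2. (This is Theorem 16 of the paper, a formula for the length of the congruence lattice of a finite strongly Fregean algebra.) -/

import Mathlib

variable {A : Type*}

/-- `η` is a completely meet irreducible member of `C`, with (unique) cover `p` in `C`. -/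
def IsCMI (C : Set (Setoid A)) (η p : Setoid A) : Prop :=
  η ∈ C ∧ p ∈ C ∧ η < p ∧ ∀ β ∈ C, η < β → p ≤ β

/-- A single up or down transposition between the intervals `I[pq.1, pq.2]`
and `I[rs.1, rs.2]` of `C`. -/
def Persp (C : Set (Setoid A)) (pq rs : Setoid A × Setoid A) : Prop :=
  pq.1 ∈ C ∧ pq.2 ∈ C ∧ rs.1 ∈ C ∧ rs.2 ∈ C ∧
    ((pq.1 = pq.2 ⊓ rs.1 ∧ rs.2 = pq.2 ⊔ rs.1) ∨
      (rs.1 = rs.2 ⊓ pq.1 ∧ pq.2 = rs.2 ⊔ pq.1))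

/-- Projectivity of intervals of `C`: a finite chain of up and down transpositions. -/
def Projective (C : Set (Setoid A)) : Setoid A × Setoid A → Setoid A × Setoid A → Prop :=
  Relation.ReflTransGen (Persp C)

/-- Prime interval projectivity `φ ∼ ψ`: the prime intervals `I[φ,φ⁺]` and `I[ψ,ψ⁺]`
over completely meet irreducible members of `C` are projective. -/
def PIP (C : Set (Setoid A)) (φ ψ : Setoid A) : Prop :=
  ∃ p q, IsCMI C φ p ∧ IsCMI C ψ q ∧ Projective C (φ, p) (ψ, q)

/-- `Θ(a,b)`: the least member of `C` containing the pair `(a, b)`. -/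
def theta (C : Set (Setoid A)) (a b : A) : Setoid A :=
  sInf {s | s ∈ C ∧ s.r a b}

/-- The relation `φ • ψ`: the pairs of `p = φ⁺ = ψ⁺` on which `φ` and `ψ` agree
(the complement of the symmetric difference of `φ` and `ψ` intersected with `p`). -/
def Bul (p φ ψ : Setoid A) (x y : A) : Prop :=
  p.r x y ∧ (φ.r x y ↔ ψ.r x y)

/-! Induction on the length of `C`. Pick an atom `μ` and a completely meet irreducible `η₀` with
`μ ⊓ η₀ = ⊥`, so that `η₀⁺ = μ ⊔ η₀`. Every completely meet irreducible `γ` not above `μ` is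
projective to `η₀` through `I[⊥, μ]`, and projectivities between members above `μ` lift to the
interval `[μ, ⊤]`, whose length is one less. Hence the PIP classes of `[μ, ⊤]` are those of `C`,
except that the class `U` of `η₀` is replaced by `W = {ψ ∈ U | μ ≤ ψ}`. Multiplication by `η₀` in
the Boolean group `(Ū, •)` maps `U \ W` bijectively onto `W ∪ {η₀⁺}`, so `|U| + 1 = 2 (|W| + 1)`.
The group structure rests on (O): a prime quotient `α ≺ β` cuts each `β`-class into at most two
`α`-classes, which identifies `φ • ψ` with the third element of the diamond `[φ ⊓ ψ, φ⁺]`. -/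

instance [Finite A] : Finite (Setoid A) :=
  Finite.of_injective (fun s : Setoid A => (s : A → A → Prop)) fun _ _ h =>
    Setoid.ext fun x y => Iff.of_eq (congrFun (congrFun h x) y)

section General

variable {C C' : Set (Setoid A)} {η φ ψ p q μ : Setoid A}

theorem IsCMI.mem (h : IsCMI C η p) : η ∈ C := h.1

theorem IsCMI.cover_mem (h : IsCMI C η p) : p ∈ C := h.2.1

theorem IsCMI.lt (h : IsCMI C η p) : η < p := h.2.2.1

theorem IsCMI.cover_le (h : IsCMI C η p) {β : Setoid A} (hβ : β ∈ C) (hlt : η < β) : p ≤ β :=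
  h.2.2.2 β hβ hlt

theorem IsCMI.cover_eq (h₁ : IsCMI C η p) (h₂ : IsCMI C η q) : p = q :=
  le_antisymm (h₁.cover_le h₂.cover_mem h₂.lt) (h₂.cover_le h₁.cover_mem h₁.lt)

theorem isCMI_sep_le_iff : IsCMI {γ ∈ C | μ ≤ γ} η p ↔ IsCMI C η p ∧ μ ≤ η :=
  ⟨fun h => ⟨⟨h.1.1, h.2.1.1, h.lt, fun _ hβ hlt => h.cover_le ⟨hβ, h.1.2.trans hlt.le⟩ hlt⟩,
      h.1.2⟩,
    fun ⟨h, hμ⟩ => ⟨⟨h.mem, hμ⟩, ⟨h.cover_mem, hμ.trans h.lt.le⟩, h.lt,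
      fun _ hβ hlt => h.cover_le hβ.1 hlt⟩⟩

theorem Persp.symm {x y : Setoid A × Setoid A} (h : Persp C x y) : Persp C y x :=
  let ⟨h₁, h₂, h₃, h₄, h⟩ := h
  ⟨h₃, h₄, h₁, h₂, h.symm⟩

theorem Persp.mono (hC : C ⊆ C') {x y : Setoid A × Setoid A} (h : Persp C x y) :
    Persp C' x y :=
  let ⟨h₁, h₂, h₃, h₄, h⟩ := h
  ⟨hC h₁, hC h₂, hC h₃, hC h₄, h⟩

theorem Projective.symm {x y : Setoid A × Setoid A} (h : Projective C x y) :
    Projective C y x := by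
  induction h with
  | refl => exact .refl
  | tail _ hyz ih => exact .head hyz.symm ih

theorem Projective.mono (hC : C ⊆ C') {x y : Setoid A × Setoid A} (h : Projective C x y) :
    Projective C' x y :=
  Relation.ReflTransGen.mono (fun _ _ => Persp.mono hC) _ _ h

theorem IsCMI.pip_self (h : IsCMI C η p) : PIP C η η :=
  ⟨p, p, h, h, .refl⟩

theorem PIP.symm (h : PIP C φ ψ) : PIP C ψ φ :=
  let ⟨p, q, hφ, hψ, h⟩ := h
  ⟨q, p, hψ, hφ, h.symm⟩

theorem PIP.trans {χ : Setoid A} (h : PIP C φ ψ) (h' : PIP C ψ χ) : PIP C φ χ :=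
  let ⟨p, _, hφ, hψ, h⟩ := h
  let ⟨_, r, hψ', hχ, h'⟩ := h'
  ⟨p, r, hφ, hχ, h.trans (hψ.cover_eq hψ' ▸ h')⟩

theorem PIP.projective (h : PIP C φ ψ) (hφ : IsCMI C φ p) (hψ : IsCMI C ψ q) :
    Projective C (φ, p) (ψ, q) :=
  let ⟨_, _, hφ', hψ', h⟩ := h
  hφ'.cover_eq hφ ▸ hψ'.cover_eq hψ ▸ h

theorem PIP.exists_isCMI_left (h : PIP C φ ψ) : ∃ p, IsCMI C φ p :=
  let ⟨p, _, hφ, _⟩ := h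
  ⟨p, hφ⟩

theorem PIP.mono_sep_le (h : PIP {γ ∈ C | μ ≤ γ} φ ψ) : PIP C φ ψ :=
  let ⟨p, q, hφ, hψ, h⟩ := h
  ⟨p, q, (isCMI_sep_le_iff.1 hφ).1, (isCMI_sep_le_iff.1 hψ).1, h.mono fun _ hγ => hγ.1⟩

def pipClass (C : Set (Setoid A)) (η : Setoid A) : Set (Setoid A) :=
  {ψ | PIP C ψ η}

def pipClasses (C : Set (Setoid A)) : Set (Set (Setoid A)) :=
  {U | ∃ η p, IsCMI C η p ∧ U = pipClass C η}

theorem IsCMI.mem_pipClass (h : IsCMI C η p) : η ∈ pipClass C η := h.pip_self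

theorem PIP.pipClass_eq (h : PIP C φ ψ) : pipClass C φ = pipClass C ψ :=
  Set.ext fun _ => ⟨fun hx => hx.trans h, fun hx => hx.trans h.symm⟩

def HasChain (C : Set (Setoid A)) (n : ℕ) : Prop :=
  ∃ c : Fin (n + 1) → Setoid A, (∀ i, c i ∈ C) ∧ StrictMono c

theorem hasChain_succ_of_lt {n : ℕ} {c : Fin (n + 1) → Setoid A} (hc : ∀ i, c i ∈ C)
    (hmono : StrictMono c) {x : Setoid A} (hx : x ∈ C) (hlt : x < c 0) :
    HasChain C (n + 1) :=
  ⟨Matrix.vecCons x c, Fin.cases hx hc, strictMono_vecCons.2 ⟨hlt, hmono⟩⟩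

theorem pipClasses_eq_empty (h : ¬ HasChain C 1) : pipClasses C = ∅ :=
  Set.eq_empty_of_forall_notMem fun _ ⟨η, p, hη, _⟩ => h
    ⟨![η, p], Fin.forall_fin_two.2 ⟨hη.mem, hη.cover_mem⟩, by simp [strictMono_vecCons, hη.lt]⟩

end General

def oneClass (one : A) (α : Setoid A) : Set A := {x | α.r one x}

/-- The conditions (M), (O), (R), (P) on a family of equivalence relations closed under meets and
nonempty joins. The least member need not be the identity relation, so that every interval
`[μ, ⊤]` of such a family is again one (`FregeanLattice.Ici`). -/
structure FregeanLattice (A : Type*) (one : A) where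
  C : Set (Setoid A)
  sInf_mem : ∀ S ⊆ C, sInf S ∈ C
  sSup_mem : ∀ S ⊆ C, S.Nonempty → sSup S ∈ C
  modular : ∀ x ∈ C, ∀ y ∈ C, ∀ z ∈ C, x ≤ z → x ⊔ y ⊓ z = (x ⊔ y) ⊓ z
  sup_theta_eq_iff : ∀ α ∈ C, ∀ a b : A, α ⊔ theta C one a = α ⊔ theta C one b ↔ α.r a b
  eq_of_rel_one_iff : ∀ α ∈ C, ∀ β ∈ C, (∀ x : A, α.r one x ↔ β.r one x) → α = β
  cover_eq_of_projective : ∀ φ ψ p q : Setoid A, IsCMI C φ p → IsCMI C ψ q →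
    Projective C (φ, p) (ψ, q) → p = q

namespace FregeanLattice

variable {one : A} (K : FregeanLattice A one) {a b c e p q v w α β γ η η₀ φ ψ χ χ₀ δ μ : Setoid A}

def bot : Setoid A := sInf K.C

theorem bot_mem : K.bot ∈ K.C := K.sInf_mem K.C le_rfl

theorem bot_le (hγ : γ ∈ K.C) : K.bot ≤ γ := sInf_le hγ

theorem inf_mem (ha : a ∈ K.C) (hb : b ∈ K.C) : a ⊓ b ∈ K.C := by
  simpa only [sInf_pair] using K.sInf_mem {a, b} (Set.pair_subset ha hb)

theorem sup_mem (ha : a ∈ K.C) (hb : b ∈ K.C) : a ⊔ b ∈ K.C := by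
  simpa only [sSup_pair] using K.sSup_mem {a, b} (Set.pair_subset ha hb) (Set.insert_nonempty _ _)

theorem theta_mem (x y : A) : theta K.C x y ∈ K.C := K.sInf_mem _ fun _ hs => hs.1

theorem rel_theta (x y : A) : (theta K.C x y).r x y := fun _ ⟨_, hs⟩ => hs

theorem theta_le (hα : α ∈ K.C) {x y : A} (h : α.r x y) : theta K.C x y ≤ α := sInf_le ⟨hα, h⟩

theorem eq_sSup_theta (hα : α ∈ K.C) : α = sSup (theta K.C one '' oneClass one α) := by
  have hβ : sSup (theta K.C one '' oneClass one α) ∈ K.C :=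
    K.sSup_mem _ (Set.image_subset_iff.2 fun _ _ => K.theta_mem _ _)
      ⟨_, Set.mem_image_of_mem _ (α.refl one)⟩
  refine K.eq_of_rel_one_iff α hα _ hβ fun x => ⟨fun hx => ?_, fun hx => ?_⟩
  · exact (le_sSup (Set.mem_image_of_mem (theta K.C one) hx) :) (K.rel_theta one x)
  · exact sSup_le (Set.forall_mem_image.2 fun _ hy => K.theta_le hα hy) hx

theorem le_iff_oneClass_subset (hα : α ∈ K.C) (hβ : β ∈ K.C) :
    α ≤ β ↔ oneClass one α ⊆ oneClass one β := by
  refine ⟨fun h _ hx => h hx, fun h => ?_⟩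
  rw [K.eq_sSup_theta hα]
  exact sSup_le (Set.forall_mem_image.2 fun _ hx => K.theta_le hβ (h hx))

theorem exists_rel_one_of_lt (hα : α ∈ K.C) (hβ : β ∈ K.C) (h : α < β) :
    ∃ x, β.r one x ∧ ¬ α.r one x := by
  by_contra! hc
  exact h.not_ge ((K.le_iff_oneClass_subset hβ hα).2 hc)

/-! ### Prime quotients -/

def CovBy (a b : Setoid A) : Prop :=
  a ∈ K.C ∧ b ∈ K.C ∧ a < b ∧ ∀ γ ∈ K.C, a ≤ γ → γ ≤ b → γ = a ∨ γ = b

variable {K}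

theorem CovBy.mem_left (h : K.CovBy a b) : a ∈ K.C := h.1

theorem CovBy.mem_right (h : K.CovBy a b) : b ∈ K.C := h.2.1

theorem CovBy.lt (h : K.CovBy a b) : a < b := h.2.2.1

theorem CovBy.eq_or_eq (h : K.CovBy a b) (hγ : γ ∈ K.C) (haγ : a ≤ γ) (hγb : γ ≤ b) :
    γ = a ∨ γ = b :=
  h.2.2.2 γ hγ haγ hγb

theorem CovBy.eq_left_of_ne (h : K.CovBy a b) (hγ : γ ∈ K.C) (haγ : a ≤ γ) (hγb : γ ≤ b)
    (hne : γ ≠ b) : γ = a :=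
  (h.eq_or_eq hγ haγ hγb).resolve_right hne

theorem CovBy.eq_right_of_ne (h : K.CovBy a b) (hγ : γ ∈ K.C) (haγ : a ≤ γ) (hγb : γ ≤ b)
    (hne : γ ≠ a) : γ = b :=
  (h.eq_or_eq hγ haγ hγb).resolve_left hne

variable (K)

theorem covBy_of_isCMI (h : IsCMI K.C η p) : K.CovBy η p :=
  ⟨h.mem, h.cover_mem, h.lt, fun _ hγ hηγ hγp =>
    hηγ.eq_or_lt.imp Eq.symm fun hlt => hγp.antisymm (h.cover_le hγ hlt)⟩

theorem covBy_of_lt [Finite A] (ha : a ∈ K.C) (hb : b ∈ K.C) (h : a < b) :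
    ∃ μ, K.CovBy a μ := by
  obtain ⟨μ, ⟨hμ, haμ⟩, hmin⟩ :=
    Set.Finite.exists_minimalFor id {γ | γ ∈ K.C ∧ a < γ} (Set.toFinite _) ⟨b, hb, h⟩
  refine ⟨μ, ha, hμ, haμ, fun γ hγ haγ hγμ => haγ.eq_or_lt.imp Eq.symm fun hlt => ?_⟩
  exact hγμ.antisymm (hmin ⟨hγ, hlt⟩ hγμ)

variable {K}

theorem CovBy.exists_isCMI_inf_eq [Finite A] (h : K.CovBy a b) :
    ∃ χ, IsCMI K.C χ (b ⊔ χ) ∧ b ⊓ χ = a := by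
  obtain ⟨χ, ⟨hχ, haχ, hbχ⟩, hmax⟩ := Set.Finite.exists_maximalFor id
    {γ | γ ∈ K.C ∧ a ≤ γ ∧ ¬ b ≤ γ} (Set.toFinite _) ⟨a, h.mem_left, le_rfl, h.lt.not_ge⟩
  have hcmi : IsCMI K.C χ (b ⊔ χ) := by
    refine ⟨hχ, K.sup_mem h.mem_right hχ, right_lt_sup.2 hbχ, fun β hβ hlt => sup_le ?_ hlt.le⟩
    by_contra hbβ
    exact hlt.not_ge (hmax ⟨hβ, haχ.trans hlt.le, hbβ⟩ hlt.le)
  refine ⟨χ, hcmi, h.eq_left_of_ne (K.inf_mem h.mem_right hχ) (le_inf h.lt.le haχ) inf_le_left ?_⟩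
  exact fun he => hbχ (inf_eq_left.1 he)

theorem CovBy.sup_right (h : K.CovBy a b) (hc : c ∈ K.C) (habc : a = b ⊓ c) :
    K.CovBy c (b ⊔ c) := by
  have hbc : ¬ b ≤ c := fun hbc => h.lt.ne (habc.trans (inf_eq_left.2 hbc))
  refine ⟨hc, K.sup_mem h.mem_right hc, right_lt_sup.2 hbc, fun γ hγ hcγ hγbc => ?_⟩
  have hmod : c ⊔ b ⊓ γ = (c ⊔ b) ⊓ γ := K.modular c hc b h.mem_right γ hγ hcγ
  rw [sup_comm c b, inf_eq_right.2 hγbc] at hmod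
  rcases h.eq_or_eq (K.inf_mem h.mem_right hγ)
    (habc ▸ inf_le_inf_left b hcγ) inf_le_left with hγ' | hγ'
  · rw [hγ', habc, inf_comm, sup_inf_self] at hmod
    exact Or.inl hmod.symm
  · rw [hγ', sup_comm] at hmod
    exact Or.inr hmod.symm

theorem CovBy.of_sup_right (h : K.CovBy c (b ⊔ c)) (ha : a ∈ K.C) (hb : b ∈ K.C)
    (habc : a = b ⊓ c) : K.CovBy a b := by
  have hbc : ¬ b ≤ c := fun hbc => h.lt.ne' (sup_eq_right.2 hbc)
  refine ⟨ha, hb, habc ▸ inf_lt_left.2 hbc, fun γ hγ haγ hγb => ?_⟩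
  have hmod : γ ⊔ c ⊓ b = (γ ⊔ c) ⊓ b := K.modular γ hγ c h.mem_left b hb hγb
  rw [inf_comm c b, ← habc, sup_eq_left.2 haγ] at hmod
  rcases h.eq_or_eq (K.sup_mem hγ h.mem_left) le_sup_right
    (sup_le_sup_right hγb c) with hγ' | hγ'
  · rw [hγ', inf_comm, ← habc] at hmod
    exact Or.inl hmod
  · rw [hγ', inf_eq_right.2 le_sup_left] at hmod
    exact Or.inr hmod

theorem _root_.Persp.covBy {x y : Setoid A × Setoid A} (h : Persp K.C x y) (hx : K.CovBy x.1 x.2) :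
    K.CovBy y.1 y.2 := by
  obtain ⟨-, hb, hc, he, ⟨hbc, hbce⟩ | ⟨hea, hae⟩⟩ := h
  · exact hbce ▸ hx.sup_right hc hbc
  · exact (hae ▸ hx).of_sup_right hc he hea

theorem _root_.Projective.covBy {x y : Setoid A × Setoid A} (h : Projective K.C x y)
    (hx : K.CovBy x.1 x.2) : K.CovBy y.1 y.2 := by
  induction h with
  | refl => exact hx
  | tail _ hyz ih => exact hyz.covBy ih

variable (K)

theorem sup_theta_eq_or (hχ : IsCMI K.C χ p) (w : A) :
    χ ⊔ theta K.C one w = χ ∨ χ ⊔ theta K.C one w = p ⊔ theta K.C one w := by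
  refine (le_sup_left : χ ≤ χ ⊔ theta K.C one w).eq_or_lt.imp Eq.symm fun hlt => ?_
  have hp : p ≤ χ ⊔ theta K.C one w := hχ.cover_le (K.sup_mem hχ.mem (K.theta_mem _ _)) hlt
  exact le_antisymm (sup_le_sup_right hχ.lt.le _) (sup_le hp le_sup_right)

/-- A prime quotient `a ≺ b` cuts every `b`-class into at most two `a`-classes. -/
theorem rel_of_covBy [Finite A] (hab : K.CovBy a b) {x y z : A} (hxy : b.r x y) (hxz : b.r x z)
    (haxy : ¬ a.r x y) (haxz : ¬ a.r x z) : a.r y z := by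
  obtain ⟨χ, hχ, hbχ⟩ := hab.exists_isCMI_inf_eq
  have hb : b.r y z := b.trans (b.symm hxy) hxz
  have hχ_of_b : ∀ {u v}, b.r u v → χ.r u v → a.r u v := fun huv hχuv => hbχ ▸ ⟨huv, hχuv⟩
  -- The joins `χ ⊔ Θ(1, w)` for `w = x, y, z` take at most two values, the one for `x` differs
  -- from the others by (O), so the ones for `y` and `z` agree.
  have hsame : ∀ {u v}, b.r u v → (b ⊔ χ) ⊔ theta K.C one u = (b ⊔ χ) ⊔ theta K.C one v :=
    fun huv => (K.sup_theta_eq_iff _ hχ.cover_mem _ _).2 (le_sup_left (a := b) huv)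
  have hne : ∀ {u v}, b.r u v → ¬ a.r u v → χ ⊔ theta K.C one u ≠ χ ⊔ theta K.C one v :=
    fun huv hauv he => hauv (hχ_of_b huv ((K.sup_theta_eq_iff χ hχ.mem _ _).1 he))
  refine hχ_of_b hb ((K.sup_theta_eq_iff χ hχ.mem _ _).1 ?_)
  have hxy' := hne hxy haxy
  have hxz' := hne hxz haxz
  have hsxy := hsame hxy
  have hsxz := hsame hxz
  rcases K.sup_theta_eq_or hχ x with hx | hx <;> rcases K.sup_theta_eq_or hχ y with hy | hy <;>
    rcases K.sup_theta_eq_or hχ z with hz | hz <;> simp_all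

/-! ### Lower covers of a common cover and the product `φ • ψ` -/

theorem eq_of_isCMI_le (hφ : IsCMI K.C φ p) (hψ : IsCMI K.C ψ p) (h : φ ≤ ψ) : φ = ψ :=
  ((K.covBy_of_isCMI hφ).eq_left_of_ne hψ.mem h hψ.lt.le hψ.lt.ne).symm

theorem sup_eq_of_isCMI (hφ : IsCMI K.C φ p) (hψ : IsCMI K.C ψ p) (hne : φ ≠ ψ) : φ ⊔ ψ = p :=
  le_antisymm (sup_le hφ.lt.le hψ.lt.le) <| hφ.cover_le (K.sup_mem hφ.mem hψ.mem) <|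
    left_lt_sup.2 fun hψφ => hne (K.eq_of_isCMI_le hψ hφ hψφ).symm

theorem covBy_inf_of_isCMI (hφ : IsCMI K.C φ p) (hψ : IsCMI K.C ψ p) (hne : φ ≠ ψ) :
    K.CovBy (φ ⊓ ψ) φ :=
  (K.sup_eq_of_isCMI hφ hψ hne ▸ K.covBy_of_isCMI hψ).of_sup_right
    (K.inf_mem hφ.mem hψ.mem) hφ.mem rfl

theorem persp_inf_of_isCMI (hφ : IsCMI K.C φ p) (hψ : IsCMI K.C ψ p) (hne : φ ≠ ψ) :
    Persp K.C (φ ⊓ ψ, φ) (ψ, p) :=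
  ⟨K.inf_mem hφ.mem hψ.mem, hφ.mem, hψ.mem, hψ.cover_mem,
    Or.inl ⟨rfl, (K.sup_eq_of_isCMI hφ hψ hne).symm⟩⟩

/-- For distinct lower covers `φ`, `ψ` of `p` such a third element is `φ • ψ`
(`IsThird.rel_one_iff`). -/
def IsThird (p φ ψ δ : Setoid A) : Prop :=
  δ ∈ K.C ∧ φ ⊓ ψ < δ ∧ δ < p ∧ δ ≠ φ ∧ δ ≠ ψ

variable {K}

theorem IsThird.mem (h : K.IsThird p φ ψ δ) : δ ∈ K.C := h.1

theorem IsThird.inf_lt (h : K.IsThird p φ ψ δ) : φ ⊓ ψ < δ := h.2.1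

theorem IsThird.lt (h : K.IsThird p φ ψ δ) : δ < p := h.2.2.1

theorem IsThird.symm (h : K.IsThird p φ ψ δ) : K.IsThird p ψ φ δ :=
  let ⟨hδ, hlt, hδp, hφ, hψ⟩ := h
  ⟨hδ, inf_comm φ ψ ▸ hlt, hδp, hψ, hφ⟩

theorem IsThird.inf_eq (hφ : IsCMI K.C φ p) (hψ : IsCMI K.C ψ p) (hne : φ ≠ ψ)
    (h : K.IsThird p φ ψ δ) : φ ⊓ δ = φ ⊓ ψ := by
  refine (K.covBy_inf_of_isCMI hφ hψ hne).eq_left_of_ne (K.inf_mem hφ.mem h.mem)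
    (le_inf inf_le_left h.inf_lt.le) inf_le_left fun hφδ => ?_
  have hlt : φ < δ := (inf_eq_left.1 hφδ).lt_of_ne h.2.2.2.1.symm
  exact h.lt.not_ge (hφ.cover_le h.mem hlt)

theorem IsThird.sup_eq (hφ : IsCMI K.C φ p) (hψ : IsCMI K.C ψ p) (hne : φ ≠ ψ)
    (h : K.IsThird p φ ψ δ) : φ ⊔ δ = p := by
  refine le_antisymm (sup_le hφ.lt.le h.lt.le) (hφ.cover_le (K.sup_mem hφ.mem h.mem) ?_)
  refine left_lt_sup.2 fun hδφ => h.inf_lt.ne ?_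
  rw [← h.inf_eq hφ hψ hne, inf_eq_right.2 hδφ]

theorem IsThird.persp (hφ : IsCMI K.C φ p) (hψ : IsCMI K.C ψ p) (hne : φ ≠ ψ)
    (h : K.IsThird p φ ψ δ) : Persp K.C (φ ⊓ ψ, φ) (δ, p) :=
  ⟨K.inf_mem hφ.mem hψ.mem, hφ.mem, h.mem, hψ.cover_mem,
    Or.inl ⟨(h.inf_eq hφ hψ hne).symm, (h.sup_eq hφ hψ hne).symm⟩⟩

theorem IsThird.projective (hφ : IsCMI K.C φ p) (hψ : IsCMI K.C ψ p) (hne : φ ≠ ψ)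
    (h : K.IsThird p φ ψ δ) : Projective K.C (ψ, p) (δ, p) :=
  .head (K.persp_inf_of_isCMI hφ hψ hne).symm (.single (h.persp hφ hψ hne))

theorem IsThird.covBy (hφ : IsCMI K.C φ p) (hψ : IsCMI K.C ψ p) (hne : φ ≠ ψ)
    (h : K.IsThird p φ ψ δ) : K.CovBy δ p :=
  h.persp hφ hψ hne |>.covBy (K.covBy_inf_of_isCMI hφ hψ hne)

theorem IsThird.isCMI [Finite A] (hφ : IsCMI K.C φ p) (hψ : IsCMI K.C ψ p) (hne : φ ≠ ψ)
    (h : K.IsThird p φ ψ δ) : IsCMI K.C δ p := by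
  obtain ⟨χ, hχ, hpχ⟩ := (h.covBy hφ hψ hne).exists_isCMI_inf_eq
  have hδχ : Persp K.C (δ, p) (χ, p ⊔ χ) :=
    ⟨h.mem, hψ.cover_mem, hχ.mem, hχ.cover_mem, Or.inl ⟨hpχ.symm, rfl⟩⟩
  have hp : p = p ⊔ χ :=
    K.cover_eq_of_projective ψ χ p _ hψ hχ ((h.projective hφ hψ hne).tail hδχ)
  have hχδ : χ = δ := by rw [← hpχ, inf_eq_right.2 (le_sup_right.trans hp.ge)]
  rw [← hp, hχδ] at hχ
  exact hχ

theorem IsThird.pip [Finite A] (hφ : IsCMI K.C φ p) (hψ : IsCMI K.C ψ p) (hne : φ ≠ ψ)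
    (h : K.IsThird p φ ψ δ) : PIP K.C δ ψ :=
  ⟨p, p, h.isCMI hφ hψ hne, hψ, (h.projective hφ hψ hne).symm⟩

theorem IsThird.rel_one_iff [Finite A] (hφ : IsCMI K.C φ p) (hψ : IsCMI K.C ψ p)
    (hne : φ ≠ ψ) (h : K.IsThird p φ ψ δ) (x : A) : δ.r one x ↔ Bul p φ ψ one x := by
  have hφδ : ∀ {y}, φ.r one y → δ.r one y → ψ.r one y := fun hφy hδy =>
    (by rw [← h.inf_eq hφ hψ hne]; exact ⟨hφy, hδy⟩ : (φ ⊓ ψ).r one _).2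
  have hψδ : ∀ {y}, ψ.r one y → δ.r one y → φ.r one y := fun hψy hδy =>
    (by rw [← h.symm.inf_eq hψ hφ hne.symm]; exact ⟨hψy, hδy⟩ : (ψ ⊓ φ).r one _).2
  refine ⟨fun hx => ⟨h.lt.le hx, fun hφx => hφδ hφx hx, fun hψx => hψδ hψx hx⟩,
    fun ⟨hpx, hiff⟩ => ?_⟩
  by_cases hφx : φ.r one x
  · exact h.inf_lt.le ⟨hφx, hiff.1 hφx⟩
  have hψx : ¬ ψ.r one x := mt hiff.2 hφx
  -- Some `e` in the `δ`-class of `1` lies outside the `φ`- and `ψ`-classes of `1`; by the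
  -- splitting lemma `x` is then `φ`- and `ψ`-related to `e`.
  obtain ⟨e, hδe, hθe⟩ := K.exists_rel_one_of_lt (K.inf_mem hφ.mem hψ.mem) h.mem h.inf_lt
  have hφe : ¬ φ.r one e := fun hφe => hθe ⟨hφe, hφδ hφe hδe⟩
  have hψe : ¬ ψ.r one e := fun hψe => hθe ⟨hψδ hψe hδe, hψe⟩
  have hpe : p.r one e := h.lt.le hδe
  have hxe : δ.r x e := h.inf_lt.le
    ⟨K.rel_of_covBy (K.covBy_of_isCMI hφ) hpx hpe hφx hφe,
      K.rel_of_covBy (K.covBy_of_isCMI hψ) hpx hpe hψx hψe⟩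
  exact δ.trans hδe (δ.symm hxe)

theorem IsThird.ne (hφ : IsCMI K.C φ p) (h : K.IsThird p φ ψ δ) : φ ≠ ψ := by
  rintro rfl
  obtain ⟨hδ, hlt, hδp, -⟩ := h
  rw [inf_idem] at hlt
  exact hδp.not_ge (hφ.cover_le hδ hlt)

variable (K)

theorem isThird_of_rel_one_iff (hφ : IsCMI K.C φ p) (hψ : IsCMI K.C ψ p) (hne : φ ≠ ψ)
    (hδ : δ ∈ K.C) (hrel : ∀ x, δ.r one x ↔ Bul p φ ψ one x) (hθδ : φ ⊓ ψ ≠ δ) :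
    K.IsThird p φ ψ δ := by
  have hφp : ∀ {x}, φ.r one x → p.r one x := fun hx => hφ.lt.le hx
  have hψp : ∀ {x}, ψ.r one x → p.r one x := fun hx => hψ.lt.le hx
  simp only [Bul] at hrel
  have hθle : φ ⊓ ψ ≤ δ := (K.le_iff_oneClass_subset (K.inf_mem hφ.mem hψ.mem) hδ).2
    fun x ⟨hφx, hψx⟩ => (hrel x).2 ⟨hφp hφx, iff_of_true hφx hψx⟩
  have hδp : δ < p := by
    refine lt_of_le_of_ne ((K.le_iff_oneClass_subset hδ hψ.cover_mem).2
      fun x hx => ((hrel x).1 hx).1) fun hδp => hne ?_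
    refine K.eq_of_rel_one_iff φ hφ.mem ψ hψ.mem fun x => ?_
    have hx := hrel x
    rw [hδp] at hx
    have := @hφp x
    have := @hψp x
    tauto
  refine ⟨hδ, hθle.lt_of_ne hθδ, hδp, fun hδφ => hψ.lt.ne ?_, fun hδψ => hφ.lt.ne ?_⟩
  · refine K.eq_of_rel_one_iff ψ hψ.mem p hψ.cover_mem fun x => ⟨hψp, fun hpx => ?_⟩
    have := hrel x
    rw [hδφ] at this
    tauto
  · refine K.eq_of_rel_one_iff φ hφ.mem p hφ.cover_mem fun x => ⟨hφp, fun hpx => ?_⟩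
    have := hrel x
    rw [hδψ] at this
    tauto

theorem inf_ne_left_of_isCMI (hφ : IsCMI K.C φ p) (hψ : IsCMI K.C ψ p) (hne : φ ≠ ψ) :
    φ ⊓ ψ ≠ φ :=
  fun h => hne (K.eq_of_isCMI_le hφ hψ (inf_eq_left.1 h))

theorem isThird_sup_of_covBy (hφ : IsCMI K.C φ p) (hψ : IsCMI K.C ψ p) (hne : φ ≠ ψ)
    (hab : K.CovBy a b) (hbp : b ≤ p) (hφb : φ ⊓ b = a) (hψb : ψ ⊓ b = a) :
    K.IsThird p φ ψ (φ ⊓ ψ ⊔ b) := by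
  have hθ : φ ⊓ ψ ∈ K.C := K.inf_mem hφ.mem hψ.mem
  have ha : a ≤ φ ⊓ ψ := le_inf (hφb ▸ inf_le_left) (hψb ▸ inf_le_left)
  have hδφ : (φ ⊓ ψ ⊔ b) ⊓ φ = φ ⊓ ψ := by
    rw [← K.modular _ hθ b hab.mem_right φ hφ.mem inf_le_left, inf_comm b, hφb,
      sup_eq_left.2 ha]
  have hδψ : (φ ⊓ ψ ⊔ b) ⊓ ψ = φ ⊓ ψ := by
    rw [← K.modular _ hθ b hab.mem_right ψ hψ.mem inf_le_right, inf_comm b, hψb,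
      sup_eq_left.2 ha]
  have hθφ := K.inf_ne_left_of_isCMI hφ hψ hne
  have hθψ : φ ⊓ ψ ≠ ψ := inf_comm ψ φ ▸ K.inf_ne_left_of_isCMI hψ hφ hne.symm
  refine ⟨K.sup_mem hθ hab.mem_right, left_lt_sup.2 fun hbθ => hab.lt.ne ?_,
    (sup_le (inf_le_left.trans hφ.lt.le) hbp).lt_of_ne fun hp => hθφ ?_,
    fun h => hθφ ?_, fun h => hθψ ?_⟩
  · rw [← hφb, inf_eq_right.2 (hbθ.trans inf_le_left)]
  · rwa [hp, inf_eq_right.2 hφ.lt.le, eq_comm] at hδφ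
  · rwa [h, inf_idem, eq_comm] at hδφ
  · rwa [h, inf_idem, eq_comm] at hδψ

theorem inf_eq_of_rel_one_iff (hφ : IsCMI K.C φ p) (hψ : ψ ∈ K.C) (hδ : δ ∈ K.C) (hb : b ∈ K.C)
    (hbφ : b ≤ φ) (hrel : ∀ x, δ.r one x ↔ Bul p φ ψ one x) : δ ⊓ b = b ⊓ ψ := by
  refine K.eq_of_rel_one_iff _ (K.inf_mem hδ hb) _ (K.inf_mem hb hψ) fun x => ?_
  show δ.r one x ∧ b.r one x ↔ b.r one x ∧ ψ.r one x
  have := hrel x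
  have : b.r one x → φ.r one x := fun h => hbφ h
  have : φ.r one x → p.r one x := fun h => hφ.lt.le h
  simp only [Bul] at *
  tauto

theorem exists_isThird_trans [Finite A] {δ₁ δ₂ : Setoid A} (hφ : IsCMI K.C φ p)
    (hχ₀ : IsCMI K.C χ₀ p) (hχ : IsCMI K.C χ p) (hφχ : φ ≠ χ)
    (ht₁ : K.IsThird p φ χ₀ δ₁) (ht₂ : K.IsThird p χ₀ χ δ₂) : ∃ δ, K.IsThird p φ χ δ := by
  have hφχ₀ := ht₁.ne hφ
  have hχ₀χ := ht₂.ne hχ₀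
  by_cases hle : φ ⊓ χ ≤ χ₀
  · exact ⟨χ₀, hχ₀.mem, hle.lt_of_ne fun h => hφχ₀ (K.eq_of_isCMI_le hχ₀ hφ (h ▸ inf_le_left)).symm,
      hχ₀.lt, hφχ₀.symm, hχ₀χ⟩
  -- Otherwise `b = φ ⊓ χ` is a witness that the two lower covers `δ₁ = φ • χ₀`,
  -- `δ₂ = χ₀ • χ` of `p` have a third element, which is `δ₁ • δ₂ = φ • χ`.
  set b := φ ⊓ χ
  have hb : b ∈ K.C := K.inf_mem hφ.mem hχ.mem
  have hbp : b ≤ p := inf_le_left.trans hφ.lt.le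
  have hbχ₀ : b ⊔ χ₀ = p :=
    le_antisymm (sup_le hbp hχ₀.lt.le) (hχ₀.cover_le (K.sup_mem hb hχ₀.mem) (right_lt_sup.2 hle))
  have hρ : K.CovBy (b ⊓ χ₀) b :=
    (hbχ₀ ▸ K.covBy_of_isCMI hχ₀).of_sup_right (K.inf_mem hb hχ₀.mem) hb rfl
  have r₁ := ht₁.rel_one_iff hφ hχ₀ hφχ₀
  have r₂ := ht₂.symm.rel_one_iff hχ hχ₀ hχ₀χ.symm
  have hδ₁ := ht₁.isCMI hφ hχ₀ hφχ₀
  have hδ₂ := ht₂.isCMI hχ₀ hχ hχ₀χ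
  have hδ₁b := K.inf_eq_of_rel_one_iff hφ hχ₀.mem hδ₁.mem hb inf_le_left r₁
  have hδ₂b := K.inf_eq_of_rel_one_iff hχ hχ₀.mem hδ₂.mem hb inf_le_right r₂
  have hp : ∀ {γ}, IsCMI K.C γ p → ∀ x, γ.r one x → p.r one x := fun hγ _ hx => hγ.lt.le hx
  simp only [Bul] at r₁ r₂
  have hδ₁₂ : δ₁ ≠ δ₂ := fun h => hφχ <| K.eq_of_rel_one_iff φ hφ.mem χ hχ.mem fun x => by
    have := r₁ x; have := r₂ x; have := hp hφ x; have := hp hχ x; subst h; tauto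
  have ht := K.isThird_sup_of_covBy hδ₁ hδ₂ hδ₁₂ hρ hbp hδ₁b hδ₂b
  refine ⟨_, K.isThird_of_rel_one_iff hφ hχ hφχ ht.mem (fun x => ?_) fun hb' => ?_⟩
  · rw [ht.rel_one_iff hδ₁ hδ₂ hδ₁₂]
    simp only [Bul, r₁, r₂]
    tauto
  · have hbφ := K.inf_ne_left_of_isCMI hφ hχ hφχ
    have hcov := hb' ▸ ht.covBy hδ₁ hδ₂ hδ₁₂
    exact hφ.lt.ne (hcov.eq_right_of_ne hφ.mem inf_le_left hφ.lt.le hbφ.symm)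

def Linked (p φ ψ : Setoid A) : Prop :=
  φ = ψ ∨ ∃ δ, K.IsThird p φ ψ δ

variable {K} in
theorem Linked.trans [Finite A] (hφ : IsCMI K.C φ p) (hχ₀ : IsCMI K.C χ₀ p)
    (hχ : IsCMI K.C χ p) (h₁ : K.Linked p φ χ₀) (h₂ : K.Linked p χ₀ χ) : K.Linked p φ χ := by
  rcases h₁ with rfl | ⟨δ₁, ht₁⟩
  · exact h₂
  rcases h₂ with rfl | ⟨δ₂, ht₂⟩
  · exact Or.inr ⟨δ₁, ht₁⟩
  by_cases hφχ : φ = χ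
  · exact Or.inl hφχ
  exact Or.inr (K.exists_isThird_trans hφ hχ₀ hχ hφχ ht₁ ht₂)

theorem linked_of_inf_eq (hφ : IsCMI K.C φ p) (hψ : IsCMI K.C ψ p) (hab : K.CovBy a b)
    (hbp : b ≤ p) (hφb : φ ⊓ b = a) (hψb : ψ ⊓ b = a) : K.Linked p φ ψ :=
  or_iff_not_imp_left.2 fun hne => ⟨_, K.isThird_sup_of_covBy hφ hψ hne hab hbp hφb hψb⟩

theorem linked_of_projective [Finite A] (hφ : IsCMI K.C φ p) {x : Setoid A × Setoid A}
    (hx : Projective K.C (φ, p) x) (hχ : IsCMI K.C χ p) (hχx : χ ⊓ x.2 = x.1) :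
    K.Linked p φ χ := by
  induction hx generalizing χ with
  | refl => exact Or.inl (hχx.symm.trans (inf_eq_left.2 hχ.lt.le))
  | @tail y z hproj hpersp ih =>
    obtain ⟨a, b⟩ := y
    obtain ⟨c, e⟩ := z
    dsimp only at ih hχx
    have hab : K.CovBy a b := Projective.covBy hproj (K.covBy_of_isCMI hφ)
    have hce : K.CovBy c e := hpersp.covBy hab
    obtain ⟨ha, hb, -, -, ⟨hbc, hbce⟩ | ⟨hea, hae⟩⟩ := hpersp <;> dsimp only at *
    · have hbe : b ≤ e := hbce ▸ le_sup_left
      refine ih hχ ?_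
      calc χ ⊓ b = χ ⊓ e ⊓ b := by rw [inf_assoc, inf_eq_right.2 hbe]
        _ = a := by rw [hχx, inf_comm, hbc]
    -- A lower cover `χ₀` of `p` with `b ⊓ χ₀ = a` is linked to `φ` by induction and to `χ`
    -- through the prime quotient `c ≺ e`.
    obtain ⟨χ₀, hχ₀, hbχ₀⟩ := hab.exists_isCMI_inf_eq
    have hp : p = b ⊔ χ₀ := K.cover_eq_of_projective φ χ₀ p _ hφ hχ₀
      (hproj.tail ⟨ha, hb, hχ₀.mem, hχ₀.cover_mem, Or.inl ⟨hbχ₀.symm, rfl⟩⟩)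
    rw [← hp] at hχ₀
    have heb : e ≤ b := hae ▸ le_sup_left
    have hχ₀e : χ₀ ⊓ e = c := by
      rw [← inf_eq_right.2 heb, ← inf_assoc, inf_comm χ₀, hbχ₀, inf_comm, hea]
    exact (ih hχ₀ (by rw [inf_comm, hbχ₀])).trans hφ hχ₀ hχ
      (K.linked_of_inf_eq hχ₀ hχ hce (heb.trans (hp ▸ le_sup_left)) hχ₀e hχx)

theorem exists_isThird_of_projective [Finite A] (hφ : IsCMI K.C φ p) (hψ : IsCMI K.C ψ p)
    (h : Projective K.C (φ, p) (ψ, p)) (hne : φ ≠ ψ) : ∃ δ, K.IsThird p φ ψ δ :=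
  (K.linked_of_projective hφ h hψ (inf_eq_left.2 hψ.lt.le)).resolve_left hne

theorem isCMI_of_mem_pipClass (hη : IsCMI K.C η p) (hφ : φ ∈ pipClass K.C η) :
    IsCMI K.C φ p := by
  obtain ⟨q, hφq⟩ := hφ.exists_isCMI_left
  rwa [K.cover_eq_of_projective φ η q p hφq hη (hφ.projective hφq hη)] at hφq

/-- The closure of `Ū` under `•` (Theorem 10 of the paper). -/
theorem exists_rel_one_iff_bul [Finite A] (hη : IsCMI K.C η p) (hφ : φ ∈ pipClass K.C η)
    (hψ : ψ ∈ pipClass K.C η) :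
    ∃ δ ∈ insert p (pipClass K.C η), ∀ x, δ.r one x ↔ Bul p φ ψ one x := by
  have hφp := K.isCMI_of_mem_pipClass hη hφ
  have hψp := K.isCMI_of_mem_pipClass hη hψ
  by_cases hne : φ = ψ
  · subst hne
    exact ⟨p, Set.mem_insert _ _, fun x => ⟨fun hx => ⟨hx, Iff.rfl⟩, fun hx => hx.1⟩⟩
  obtain ⟨δ, ht⟩ := K.exists_isThird_of_projective hφp hψp
    ((hφ.trans hψ.symm).projective hφp hψp) hne
  exact ⟨δ, Or.inr ((ht.pip hφp hψp hne).trans hψ), ht.rel_one_iff hφp hψp hne⟩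

/-! ### The interval above an atom -/

theorem theta_sep_le (hμ : μ ∈ K.C) (w : A) :
    theta {γ ∈ K.C | μ ≤ γ} one w = μ ⊔ theta K.C one w :=
  le_antisymm
    (sInf_le ⟨⟨K.sup_mem hμ (K.theta_mem one w), le_sup_left⟩,
      le_sup_right (a := μ) (K.rel_theta one w)⟩)
    (le_sInf fun _ ⟨⟨hs, hμs⟩, hw⟩ => sup_le hμs (K.theta_le hs hw))

def Ici (μ : Setoid A) (hμ : μ ∈ K.C) : FregeanLattice A one where
  C := {γ ∈ K.C | μ ≤ γ}
  sInf_mem S hS := ⟨K.sInf_mem S fun _ hs => (hS hs).1, le_sInf fun _ hs => (hS hs).2⟩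
  sSup_mem S hS hne := ⟨K.sSup_mem S (fun _ hs => (hS hs).1) hne,
    hne.elim fun _ hs => (hS hs).2.trans (le_sSup hs)⟩
  modular x hx y hy z hz := K.modular x hx.1 y hy.1 z hz.1
  sup_theta_eq_iff α hα a b := by
    rw [K.theta_sep_le hμ, K.theta_sep_le hμ, ← sup_assoc, ← sup_assoc, sup_eq_left.2 hα.2]
    exact K.sup_theta_eq_iff α hα.1 a b
  eq_of_rel_one_iff α hα β hβ := K.eq_of_rel_one_iff α hα.1 β hβ.1
  cover_eq_of_projective φ ψ p q hφ hψ h := K.cover_eq_of_projective φ ψ p q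
    (isCMI_sep_le_iff.1 hφ).1 (isCMI_sep_le_iff.1 hψ).1 (h.mono fun _ hγ => hγ.1)

theorem inf_eq_bot_of_not_le (hμ : K.CovBy K.bot μ) (hγ : γ ∈ K.C) (h : ¬ μ ≤ γ) :
    μ ⊓ γ = K.bot :=
  hμ.eq_left_of_ne (K.inf_mem hμ.mem_right hγ) (le_inf hμ.lt.le (K.bot_le hγ)) inf_le_left
    fun he => h (inf_eq_left.1 he)

theorem rel_one_iff_bot (hμ : K.CovBy K.bot μ) (hγ : γ ∈ K.C) (h : ¬ μ ≤ γ) {x : A}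
    (hx : μ.r one x) : γ.r one x ↔ K.bot.r one x := by
  refine ⟨fun hγx => ?_, fun hx => K.bot_le hγ hx⟩
  rw [← K.inf_eq_bot_of_not_le hμ hγ h]
  exact ⟨hx, hγx⟩

theorem sup_lt_sup_of_not_le (hμ : K.CovBy K.bot μ) (ha : a ∈ K.C) (hb : b ∈ K.C) (hab : a < b)
    (h : ¬ μ ≤ b) : a ⊔ μ < b ⊔ μ := by
  refine (sup_le_sup_right hab.le μ).lt_of_ne fun he => hab.ne ?_
  have hmod := K.modular a ha μ hμ.mem_right b hb hab.le
  rwa [K.inf_eq_bot_of_not_le hμ hb h, sup_eq_left.2 (K.bot_le ha), he,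
    inf_eq_right.2 le_sup_left] at hmod

theorem persp_bot_sup (hμ : K.CovBy K.bot μ) (hγ : γ ∈ K.C) (h : ¬ μ ≤ γ) :
    Persp K.C (K.bot, μ) (γ, μ ⊔ γ) :=
  ⟨K.bot_mem, hμ.mem_right, hγ, K.sup_mem hμ.mem_right hγ,
    Or.inl ⟨(K.inf_eq_bot_of_not_le hμ hγ h).symm, rfl⟩⟩

variable {K} in
theorem CovBy.eq_sup_of_le (hab : K.CovBy a b) (hμ : μ ∈ K.C) (hμb : μ ≤ b) (hμa : ¬ μ ≤ a) :
    b = μ ⊔ a :=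
  (hab.eq_right_of_ne (K.sup_mem hμ hab.mem_left) le_sup_right (sup_le hμb hab.lt.le)
    fun he => hμa (he ▸ le_sup_left)).symm

theorem cover_eq_sup_of_not_le (hμ : K.CovBy K.bot μ) (hγ : IsCMI K.C γ q) (h : ¬ μ ≤ γ) :
    q = μ ⊔ γ :=
  (hμ.sup_right hγ.mem (K.inf_eq_bot_of_not_le hμ hγ.mem h).symm).eq_right_of_ne hγ.cover_mem
    hγ.lt.le (hγ.cover_le (K.sup_mem hμ.mem_right hγ.mem) (right_lt_sup.2 h)) hγ.lt.ne'

theorem pip_of_not_le (hμ : K.CovBy K.bot μ) (hη₀ : IsCMI K.C η₀ (μ ⊔ η₀)) (hμη₀ : ¬ μ ≤ η₀)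
    (hγ : IsCMI K.C γ q) (h : ¬ μ ≤ γ) : PIP K.C γ η₀ := by
  rw [K.cover_eq_sup_of_not_le hμ hγ h] at hγ
  exact ⟨_, _, hγ, hη₀,
    .head (K.persp_bot_sup hμ hγ.mem h).symm (.single (K.persp_bot_sup hμ hη₀.mem hμη₀))⟩

theorem sup_inf_sup_eq (hμ : K.CovBy K.bot μ) (hab : K.CovBy a b) (hc : c ∈ K.C)
    (habc : a = b ⊓ c) (hcμ : μ ≤ b ⊔ c → μ ≤ c) : (b ⊔ μ) ⊓ (c ⊔ μ) = a ⊔ μ := by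
  have hμC := hμ.mem_right
  have hbc := K.sup_mem hab.mem_right hc
  suffices hb : b ⊓ (c ⊔ μ) = a by
    rw [sup_comm b, ← K.modular μ hμC b hab.mem_right _ (K.sup_mem hc hμC) le_sup_right, hb,
      sup_comm]
  refine hab.eq_left_of_ne (K.inf_mem hab.mem_right (K.sup_mem hc hμC))
    (habc ▸ inf_le_inf_left b le_sup_left) inf_le_left fun hb => hab.lt.ne ?_
  suffices hbc' : b ≤ c by rw [habc, inf_eq_left.2 hbc']
  by_cases hμc : μ ≤ c
  · exact sup_eq_left.2 hμc ▸ inf_eq_left.1 hb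
  have hmod := K.modular c hc μ hμC (b ⊔ c) hbc le_sup_right
  rw [K.inf_eq_bot_of_not_le hμ hbc (mt hcμ hμc), sup_eq_left.2 (K.bot_le hc)] at hmod
  exact (le_inf (inf_eq_left.1 hb) le_sup_left).trans hmod.ge

/-- `μ ≤ x.2 → μ ≤ x.1` says that joining `μ` does not collapse the prime quotient `x`. -/
theorem _root_.Persp.sup_Ici {K : FregeanLattice A one} (hμ : K.CovBy K.bot μ)
    {x y : Setoid A × Setoid A} (h : Persp K.C x y) (hx : K.CovBy x.1 x.2) (hxμ : μ ≤ x.2 → μ ≤ x.1)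
    (hyμ : μ ≤ y.2 → μ ≤ y.1) :
    Persp (K.Ici μ hμ.mem_right).C (x.1 ⊔ μ, x.2 ⊔ μ) (y.1 ⊔ μ, y.2 ⊔ μ) := by
  obtain ⟨a, b⟩ := x
  obtain ⟨c, e⟩ := y
  have hy := h.covBy hx
  have hmem : ∀ {γ}, γ ∈ K.C → γ ⊔ μ ∈ (K.Ici μ hμ.mem_right).C :=
    fun hγ => ⟨K.sup_mem hγ hμ.mem_right, le_sup_right⟩
  obtain ⟨ha, hb, hc, he, ⟨habc, hbce⟩ | ⟨hcea, heab⟩⟩ := h <;> dsimp only at *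
  · refine ⟨hmem ha, hmem hb, hmem hc, hmem he, Or.inl ⟨?_, ?_⟩⟩
    · exact (K.sup_inf_sup_eq hμ hx hc habc (hbce ▸ hyμ)).symm
    · rw [hbce, sup_sup_sup_comm, sup_idem]
  · refine ⟨hmem ha, hmem hb, hmem hc, hmem he, Or.inr ⟨?_, ?_⟩⟩
    · exact (K.sup_inf_sup_eq hμ hy ha hcea (heab ▸ hxμ)).symm
    · rw [heab, sup_sup_sup_comm, sup_idem]

theorem projective_bot_or_projective_Ici (hμ : K.CovBy K.bot μ) (hψ : IsCMI K.C ψ q)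
    (hμψ : μ ≤ ψ) {x : Setoid A × Setoid A} (hx : Projective K.C (ψ, q) x) :
    Projective K.C (ψ, q) (K.bot, μ) ∨ ((μ ≤ x.2 → μ ≤ x.1) ∧
      Projective (K.Ici μ hμ.mem_right).C (ψ, q) (x.1 ⊔ μ, x.2 ⊔ μ)) := by
  induction hx with
  | refl =>
    refine Or.inr ⟨fun _ => hμψ, ?_⟩
    rw [sup_eq_left.2 hμψ, sup_eq_left.2 (hμψ.trans hψ.lt.le)]
    exact .refl
  | @tail y z hproj hpersp ih =>
    rcases ih with ih | ⟨hyμ, hlift⟩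
    · exact Or.inl ih
    have hy := Projective.covBy hproj (K.covBy_of_isCMI hψ)
    by_cases hzμ : μ ≤ z.2 → μ ≤ z.1
    · exact Or.inr ⟨hzμ, hlift.tail (hpersp.sup_Ici hμ hy hyμ hzμ)⟩
    obtain ⟨c, e⟩ := z
    simp only [Classical.not_imp] at hzμ
    have he := (hpersp.covBy hy).eq_sup_of_le hμ.mem_right hzμ.1 hzμ.2
    dsimp only at hzμ he
    refine Or.inl ((hproj.tail hpersp).tail ?_)
    rw [he]
    exact (K.persp_bot_sup hμ (hpersp.covBy hy).mem_left hzμ.2).symm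

theorem pip_Ici_or_pip (hμ : K.CovBy K.bot μ) (hη₀ : IsCMI K.C η₀ (μ ⊔ η₀)) (hμη₀ : ¬ μ ≤ η₀)
    (hμφ : μ ≤ φ) (hμψ : μ ≤ ψ) (h : PIP K.C φ ψ) :
    PIP (K.Ici μ hμ.mem_right).C φ ψ ∨ PIP K.C φ η₀ := by
  obtain ⟨q, q', hφ, hψ, hproj⟩ := h
  obtain rfl := K.cover_eq_of_projective φ ψ q q' hφ hψ hproj
  rcases K.projective_bot_or_projective_Ici hμ hφ hμφ hproj with h | ⟨-, h⟩
  · exact Or.inr ⟨q, μ ⊔ η₀, hφ, hη₀, h.tail (K.persp_bot_sup hμ hη₀.mem hμη₀)⟩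
  · rw [sup_eq_left.2 hμψ, sup_eq_left.2 (hμψ.trans hψ.lt.le)] at h
    exact Or.inl ⟨q, q, isCMI_sep_le_iff.2 ⟨hφ, hμφ⟩, isCMI_sep_le_iff.2 ⟨hψ, hμψ⟩, h⟩

/-! ### The classes of `C` and of `[μ, ⊤]` -/

theorem exists_oneClass_eq_bul_of_not_le [Finite A] (hμ : K.CovBy K.bot μ)
    (hη₀ : IsCMI K.C η₀ (μ ⊔ η₀)) (hμη₀ : ¬ μ ≤ η₀) (hv : v ∈ pipClass K.C η₀) (hμv : ¬ μ ≤ v) :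
    ∃ δ ∈ insert (μ ⊔ η₀) (pipClass K.C η₀ ∩ {ψ | μ ≤ ψ}),
      oneClass one δ = {x | Bul (μ ⊔ η₀) v η₀ one x} := by
  obtain ⟨δ, hδ, hδv⟩ := K.exists_rel_one_iff_bul hη₀ hv hη₀.mem_pipClass
  refine ⟨δ, ?_, Set.ext hδv⟩
  rcases hδ with rfl | hδ
  · exact Set.mem_insert _ _
  have hvp := K.isCMI_of_mem_pipClass hη₀ hv
  have hδC := (K.isCMI_of_mem_pipClass hη₀ hδ).mem
  refine Or.inr ⟨hδ, (K.le_iff_oneClass_subset hμ.mem_right hδC).2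
    fun x hx => (hδv x).2 ⟨le_sup_left (b := η₀) hx, ?_⟩⟩
  rw [K.rel_one_iff_bot hμ hvp.mem hμv hx, K.rel_one_iff_bot hμ hη₀.mem hμη₀ hx]

theorem exists_bul_eq_oneClass_of_le [Finite A] (hμ : K.CovBy K.bot μ)
    (hη₀ : IsCMI K.C η₀ (μ ⊔ η₀)) (hμη₀ : ¬ μ ≤ η₀)
    (hw : w ∈ insert (μ ⊔ η₀) (pipClass K.C η₀ ∩ {ψ | μ ≤ ψ})) :
    ∃ v ∈ pipClass K.C η₀ \ {ψ | μ ≤ ψ},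
      {x | Bul (μ ⊔ η₀) v η₀ one x} = oneClass one w := by
  rcases hw with rfl | ⟨hw, hμw⟩
  · exact ⟨η₀, ⟨hη₀.mem_pipClass, hμη₀⟩, Set.ext fun x => ⟨fun hx => hx.1, fun hx => ⟨hx, Iff.rfl⟩⟩⟩
  obtain ⟨v, hv, hvw⟩ := K.exists_rel_one_iff_bul hη₀ hw hη₀.mem_pipClass
  have hwp := K.isCMI_of_mem_pipClass hη₀ hw
  -- A witness `x₀` of `⊥ < μ` lies in the `w`-class but not in the `η₀`-class of `1`, hence not
  -- in the `v`-class.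
  obtain ⟨x₀, hμx₀, hbotx₀⟩ := K.exists_rel_one_of_lt K.bot_mem hμ.mem_right hμ.lt
  have hμv : ¬ μ ≤ v := fun hμv => hbotx₀ <|
    (K.rel_one_iff_bot hμ hη₀.mem hμη₀ hμx₀).1 (((hvw x₀).1 (hμv hμx₀)).2.1 (hμw hμx₀))
  have hvU : v ∈ pipClass K.C η₀ :=
    hv.resolve_left fun hvp => hμv (hvp ▸ le_sup_left)
  refine ⟨v, ⟨hvU, hμv⟩, Set.ext fun x => ?_⟩
  have := hvw x
  have : w.r one x → (μ ⊔ η₀).r one x := fun h => hwp.lt.le h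
  simp only [Set.mem_ofPred_eq, oneClass, Bul] at *
  tauto

theorem ncard_pipClass_add_one [Finite A] (hμ : K.CovBy K.bot μ)
    (hη₀ : IsCMI K.C η₀ (μ ⊔ η₀)) (hμη₀ : ¬ μ ≤ η₀) :
    (pipClass K.C η₀).ncard + 1 = 2 * ((pipClass K.C η₀ ∩ {ψ | μ ≤ ψ}).ncard + 1) := by
  set U := pipClass K.C η₀
  set P := oneClass one (μ ⊔ η₀)
  -- `X ↦ X • η₀` on subsets of the class `P` of `1` in `μ ⊔ η₀` is an involution.
  set g : Set A → Set A := fun X => {x | x ∈ P ∧ (x ∈ X ↔ η₀.r one x)}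
  have hg : Set.InjOn g {X | X ⊆ P} := fun X hX Y hY hXY => by
    ext x
    have hx := Set.ext_iff.1 hXY x
    have := @hX x
    have := @hY x
    simp only [Set.mem_ofPred_eq, g] at *
    tauto
  have hoc : Set.InjOn (oneClass one) K.C := fun α hα β hβ h =>
    K.eq_of_rel_one_iff α hα β hβ fun x => Set.ext_iff.1 h x
  have himage : g '' (oneClass one '' (U \ {ψ | μ ≤ ψ})) =
      oneClass one '' insert (μ ⊔ η₀) (U ∩ {ψ | μ ≤ ψ}) := by
    refine Set.Subset.antisymm ?_ ?_
    · rintro _ ⟨_, ⟨v, ⟨hv, hμv⟩, rfl⟩, rfl⟩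
      obtain ⟨δ, hδ, hδv⟩ := K.exists_oneClass_eq_bul_of_not_le hμ hη₀ hμη₀ hv hμv
      exact ⟨δ, hδ, hδv⟩
    · rintro _ ⟨w, hw, rfl⟩
      obtain ⟨v, hv, hvw⟩ := K.exists_bul_eq_oneClass_of_le hμ hη₀ hμη₀ hw
      exact ⟨_, ⟨v, hv, rfl⟩, hvw⟩
  have hV : (U \ {ψ | μ ≤ ψ}).ncard = (insert (μ ⊔ η₀) (U ∩ {ψ | μ ≤ ψ})).ncard := by
    have hUC : ∀ {S}, S ⊆ U → S ⊆ K.C := fun hS _ hv => (K.isCMI_of_mem_pipClass hη₀ (hS hv)).mem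
    calc (U \ {ψ | μ ≤ ψ}).ncard = (oneClass one '' (U \ {ψ | μ ≤ ψ})).ncard :=
          ((hoc.mono (hUC Set.sdiff_subset)).ncard_image).symm
      _ = (g '' (oneClass one '' (U \ {ψ | μ ≤ ψ}))).ncard := by
          refine ((hg.mono ?_).ncard_image).symm
          rintro _ ⟨v, hv, rfl⟩ x hx
          exact (K.isCMI_of_mem_pipClass hη₀ hv.1).lt.le hx
      _ = (insert (μ ⊔ η₀) (U ∩ {ψ | μ ≤ ψ})).ncard := by
          rw [himage, (hoc.mono _).ncard_image]
          exact Set.insert_subset hη₀.cover_mem (hUC Set.inter_subset_left)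
  have hpW : μ ⊔ η₀ ∉ U ∩ {ψ | μ ≤ ψ} := fun h => (K.isCMI_of_mem_pipClass hη₀ h.1).lt.false
  rw [← Set.ncard_inter_add_ncard_sdiff_eq_ncard U {ψ | μ ≤ ψ}, hV, Set.ncard_insert_of_notMem hpW]
  ring

theorem pipClass_Ici_of_not_pip (hμ : K.CovBy K.bot μ) (hη₀ : IsCMI K.C η₀ (μ ⊔ η₀))
    (hμη₀ : ¬ μ ≤ η₀) (hμη : μ ≤ η) (hn : ¬ PIP K.C η η₀) :
    pipClass (K.Ici μ hμ.mem_right).C η = pipClass K.C η := by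
  refine Set.ext fun ψ => ⟨PIP.mono_sep_le, fun hψ => ?_⟩
  have hμψ : μ ≤ ψ := by
    by_contra hμψ
    obtain ⟨q', hψq'⟩ := hψ.exists_isCMI_left
    exact hn (hψ.symm.trans (K.pip_of_not_le hμ hη₀ hμη₀ hψq' hμψ))
  exact (K.pip_Ici_or_pip hμ hη₀ hμη₀ hμψ hμη hψ).resolve_right fun h => hn (hψ.symm.trans h)

theorem pipClass_Ici_of_mem [Finite A] (hμ : K.CovBy K.bot μ) (hη₀ : IsCMI K.C η₀ (μ ⊔ η₀))
    (hw : w ∈ pipClass K.C η₀) (hμw : μ ≤ w) :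
    pipClass (K.Ici μ hμ.mem_right).C w = pipClass K.C η₀ ∩ {ψ | μ ≤ ψ} := by
  refine Set.ext fun ψ => ⟨fun h => ?_, fun ⟨hψ, hμψ⟩ => ?_⟩
  · obtain ⟨q, hψq⟩ := h.exists_isCMI_left
    exact ⟨h.mono_sep_le.trans hw, (isCMI_sep_le_iff.1 hψq).2⟩
  have hwp := K.isCMI_of_mem_pipClass hη₀ hw
  have hψp := K.isCMI_of_mem_pipClass hη₀ hψ
  have hwI : IsCMI (K.Ici μ hμ.mem_right).C w (μ ⊔ η₀) := isCMI_sep_le_iff.2 ⟨hwp, hμw⟩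
  have hψI : IsCMI (K.Ici μ hμ.mem_right).C ψ (μ ⊔ η₀) := isCMI_sep_le_iff.2 ⟨hψp, hμψ⟩
  by_cases hne : ψ = w
  · exact hne ▸ hψI.pip_self
  -- The third element `ψ • w` of `[ψ ⊓ w, μ ⊔ η₀]` lies above `μ`, so it links `ψ` and `w`
  -- inside `[μ, ⊤]`.
  obtain ⟨δ, ht⟩ := K.exists_isThird_of_projective hψp hwp
    ((hψ.trans hw.symm).projective hψp hwp) hne
  have hμδ : μ ≤ δ := (K.le_iff_oneClass_subset hμ.mem_right ht.mem).2 fun x hx =>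
    (ht.rel_one_iff hψp hwp hne x).2 ⟨le_sup_left (b := η₀) hx, iff_of_true (hμψ hx) (hμw hx)⟩
  have htI : (K.Ici μ hμ.mem_right).IsThird (μ ⊔ η₀) ψ w δ := ⟨⟨ht.mem, hμδ⟩, ht.2⟩
  exact ⟨_, _, hψI, hwI, (htI.symm.projective hwI hψI (Ne.symm hne)).trans
    (htI.projective hψI hwI hne).symm⟩

theorem insert_pipClasses_Ici [Finite A] (hμ : K.CovBy K.bot μ) (hη₀ : IsCMI K.C η₀ (μ ⊔ η₀))
    (hμη₀ : ¬ μ ≤ η₀) :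
    insert (pipClass K.C η₀ ∩ {ψ | μ ≤ ψ}) (pipClasses (K.Ici μ hμ.mem_right).C) =
      insert (pipClass K.C η₀ ∩ {ψ | μ ≤ ψ}) (pipClasses K.C \ {pipClass K.C η₀}) := by
  ext U
  simp only [Set.mem_insert_iff, Set.mem_sdiff, Set.mem_singleton_iff]
  constructor
  · rintro (rfl | ⟨η, q, hη, rfl⟩)
    · exact Or.inl rfl
    obtain ⟨hηK, hμη⟩ := isCMI_sep_le_iff.1 hη
    by_cases hp : PIP K.C η η₀
    · exact Or.inl (K.pipClass_Ici_of_mem hμ hη₀ hp hμη)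
    rw [K.pipClass_Ici_of_not_pip hμ hη₀ hμη₀ hμη hp]
    exact Or.inr ⟨⟨η, q, hηK, rfl⟩, fun h => hp (h ▸ hηK.mem_pipClass : η ∈ pipClass K.C η₀)⟩
  · rintro (rfl | ⟨⟨η, q, hη, rfl⟩, hne⟩)
    · exact Or.inl rfl
    have hp : ¬ PIP K.C η η₀ := fun hp => hne hp.pipClass_eq
    have hμη : μ ≤ η := by_contra fun hμη => hp (K.pip_of_not_le hμ hη₀ hμη₀ hη hμη)
    exact Or.inr ⟨η, q, isCMI_sep_le_iff.2 ⟨hη, hμη⟩,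
      (K.pipClass_Ici_of_not_pip hμ hη₀ hμη₀ hμη hp).symm⟩

theorem finprod_pipClasses_eq_two_mul [Finite A] (hμ : K.CovBy K.bot μ) :
    ∏ᶠ U ∈ pipClasses K.C, (U.ncard + 1) =
      2 * ∏ᶠ U ∈ pipClasses (K.Ici μ hμ.mem_right).C, (U.ncard + 1) := by
  obtain ⟨η₀, hη₀, hμη₀⟩ := hμ.exists_isCMI_inf_eq
  replace hμη₀ : ¬ μ ≤ η₀ := fun h => hμ.lt.ne' (hμη₀ ▸ (inf_eq_left.2 h).symm)
  set U₀ := pipClass K.C η₀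
  set W := U₀ ∩ {ψ | μ ≤ ψ}
  have hU₀ : U₀ ∈ pipClasses K.C := ⟨η₀, _, hη₀, rfl⟩
  have hW : W ∉ pipClasses K.C \ {U₀} := fun ⟨⟨η, q, hη, hWη⟩, hne⟩ =>
    hne (hWη.trans (hWη ▸ hη.mem_pipClass : η ∈ W).1.pipClass_eq)
  have hWIci : ∏ᶠ U ∈ insert W (pipClasses (K.Ici μ hμ.mem_right).C), (U.ncard + 1) =
      ∏ᶠ U ∈ pipClasses (K.Ici μ hμ.mem_right).C, (U.ncard + 1) := by
    rcases W.eq_empty_or_nonempty with hW₀ | ⟨w, hw, hμw⟩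
    · exact finprod_mem_insert_one (by simp [hW₀])
    · have hWI : W ∈ pipClasses (K.Ici μ hμ.mem_right).C :=
        ⟨w, _, isCMI_sep_le_iff.2 ⟨K.isCMI_of_mem_pipClass hη₀ hw, hμw⟩,
          (K.pipClass_Ici_of_mem hμ hη₀ hw hμw).symm⟩
      rw [Set.insert_eq_of_mem hWI]
  calc ∏ᶠ U ∈ pipClasses K.C, (U.ncard + 1)
      = (U₀.ncard + 1) * ∏ᶠ U ∈ pipClasses K.C \ {U₀}, (U.ncard + 1) := by
        conv_lhs => rw [← Set.insert_eq_of_mem hU₀, ← Set.insert_sdiff_singleton]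
        exact finprod_mem_insert _ (fun h => h.2 rfl) (Set.toFinite _)
    _ = 2 * ((W.ncard + 1) * ∏ᶠ U ∈ pipClasses K.C \ {U₀}, (U.ncard + 1)) := by
        rw [K.ncard_pipClass_add_one hμ hη₀ hμη₀, mul_assoc]
    _ = 2 * ∏ᶠ U ∈ pipClasses (K.Ici μ hμ.mem_right).C, (U.ncard + 1) := by
        rw [← hWIci, K.insert_pipClasses_Ici hμ hη₀ hμη₀,
          finprod_mem_insert _ hW (Set.toFinite _)]

theorem exists_covBy_bot [Finite A] {n : ℕ} (hc : HasChain K.C (n + 1)) :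
    ∃ μ, K.CovBy K.bot μ :=
  let ⟨_, hc, hmono⟩ := hc
  K.covBy_of_lt K.bot_mem (hc 1) ((K.bot_le (hc 0)).trans_lt (hmono Fin.zero_lt_one))

theorem not_hasChain_Ici (hμ : K.CovBy K.bot μ) {n : ℕ} (h : ¬ HasChain K.C (n + 1)) :
    ¬ HasChain (K.Ici μ hμ.mem_right).C n := fun ⟨_, hc, hmono⟩ =>
  h (hasChain_succ_of_lt (fun i => (hc i).1) hmono K.bot_mem (hμ.lt.trans_le (hc 0).2))

theorem hasChain_Ici (hμ : K.CovBy K.bot μ) {n : ℕ} (hc : HasChain K.C (n + 1))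
    (h : ¬ HasChain K.C (n + 2)) : HasChain (K.Ici μ hμ.mem_right).C n := by
  obtain ⟨c, hc, hmono⟩ := hc
  have hex : ∃ i, μ ≤ c i := by
    by_contra! hall
    exact h (hasChain_succ_of_lt (fun i => K.sup_mem (hc i) hμ.mem_right)
      (fun i j hij => K.sup_lt_sup_of_not_le hμ (hc i) (hc j) (hmono hij) (hall j)) K.bot_mem
      (hμ.lt.trans_le le_sup_right))
  -- Deleting the first index `k` with `μ ≤ c k` and joining `μ` leaves a chain: below `k`
  -- joining `μ` is strictly monotone, from `k` on it does nothing.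
  obtain ⟨k, hk, hmin⟩ := wellFounded_lt.has_min {i | μ ≤ c i} hex
  refine ⟨fun i => c (k.succAbove i) ⊔ μ, fun i => ⟨K.sup_mem (hc _) hμ.mem_right, le_sup_right⟩,
    fun i j hij => ?_⟩
  have hab := Fin.strictMono_succAbove k hij
  rcases lt_or_gt_of_ne (k.succAbove_ne j) with hjk | hkj
  · exact K.sup_lt_sup_of_not_le hμ (hc _) (hc _) (hmono hab) fun h => hmin _ h hjk
  calc c (k.succAbove i) ⊔ μ ≤ c (max (k.succAbove i) k) :=
        sup_le (hmono.monotone (le_max_left _ _)) (hk.trans (hmono.monotone (le_max_right _ _)))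
    _ < c (k.succAbove j) := hmono (max_lt hab hkj)
    _ ≤ c (k.succAbove j) ⊔ μ := le_sup_left

theorem finprod_pipClasses_eq_two_pow [Finite A] :
    ∀ (d : ℕ) (K : FregeanLattice A one), HasChain K.C d → ¬ HasChain K.C (d + 1) →
      ∏ᶠ U ∈ pipClasses K.C, (U.ncard + 1) = 2 ^ d
  | 0, _, _, hmax => by rw [pipClasses_eq_empty hmax, finprod_mem_empty, pow_zero]
  | d + 1, K, hc, hmax => by
    obtain ⟨μ, hμ⟩ := K.exists_covBy_bot hc
    rw [K.finprod_pipClasses_eq_two_mul hμ, finprod_pipClasses_eq_two_pow d _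
      (K.hasChain_Ici hμ hc hmax) (K.not_hasChain_Ici hμ hmax), pow_succ']

end FregeanLattice

theorem stmt17_general [Finite A] (one : A) (C : Set (Setoid A))
    (hInf : ∀ S ⊆ C, sInf S ∈ C) (hSup : ∀ S ⊆ C, sSup S ∈ C)
    (hM : ∀ x ∈ C, ∀ y ∈ C, ∀ z ∈ C, x ≤ z → x ⊔ y ⊓ z = (x ⊔ y) ⊓ z)
    (hO : ∀ α ∈ C, ∀ a b : A, α ⊔ theta C one a = α ⊔ theta C one b ↔ α.r a b)
    (hR : ∀ α ∈ C, ∀ β ∈ C, (∀ x : A, α.r one x ↔ β.r one x) → α = β)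
    (hP : ∀ φ ψ p q : Setoid A, IsCMI C φ p → IsCMI C ψ q →
      Projective C (φ, p) (ψ, q) → p = q)
    (d : ℕ)
    (hchain : ∃ c : Fin (d + 1) → Setoid A, (∀ i, c i ∈ C) ∧ StrictMono c)
    (hmax : ∀ c : Fin (d + 2) → Setoid A, (∀ i, c i ∈ C) → ¬ StrictMono c) :
    ∃ F : Finset (Set (Setoid A)),
      (↑F = {U : Set (Setoid A) | ∃ η p, IsCMI C η p ∧ U = {ψ | PIP C ψ η}}) ∧
      2 ^ d = ∏ U ∈ F, (U.ncard + 1) := by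
  let K : FregeanLattice A one := ⟨C, hInf, fun S hS _ => hSup S hS, hM, hO, hR, hP⟩
  have hprod := FregeanLattice.finprod_pipClasses_eq_two_pow d K hchain
    fun ⟨c, hc, hmono⟩ => hmax c hc hmono
  refine ⟨(Set.toFinite (pipClasses C)).toFinset, Set.Finite.coe_toFinset _, ?_⟩
  rw [← hprod, finprod_mem_eq_finite_toFinset_prod]

/-- Theorem 16: for a finite strongly Fregean algebra,
`2 ^ δ(Con A) = ∏_{U ∈ Cm/∼} (|U| + 1)`, where `δ` is the length of the congruence
lattice and each `|U| + 1 = |Ū|` is the order of the Boolean group `(Ū, •)`. -/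
theorem stmt17 [Finite A] (one : A) (C : Set (Setoid A))
    (hInf : ∀ S ⊆ C, sInf S ∈ C) (hSup : ∀ S ⊆ C, sSup S ∈ C)
    (hDir : ∀ D ⊆ C, D.Nonempty → DirectedOn (· ≤ ·) D →
      ∀ x y : A, (sSup D).r x y ↔ ∃ s ∈ D, s.r x y)
    (hM : ∀ x ∈ C, ∀ y ∈ C, ∀ z ∈ C, x ≤ z → x ⊔ y ⊓ z = (x ⊔ y) ⊓ z)
    (hO : ∀ α ∈ C, ∀ a b : A, α ⊔ theta C one a = α ⊔ theta C one b ↔ α.r a b)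
    (hR : ∀ α ∈ C, ∀ β ∈ C, (∀ x : A, α.r one x ↔ β.r one x) → α = β)
    (hP : ∀ φ ψ p q : Setoid A, IsCMI C φ p → IsCMI C ψ q →
      Projective C (φ, p) (ψ, q) → p = q)
    (d : ℕ)
    (hchain : ∃ c : Fin (d + 1) → Setoid A, (∀ i, c i ∈ C) ∧ StrictMono c)
    (hmax : ∀ c : Fin (d + 2) → Setoid A, (∀ i, c i ∈ C) → ¬ StrictMono c) :
    ∃ F : Finset (Set (Setoid A)),
      (↑F = {U : Set (Setoid A) | ∃ η p, IsCMI C η p ∧ U = {ψ | PIP C ψ η}}) ∧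
      2 ^ d = ∏ U ∈ F, (U.ncard + 1) :=
  stmt17_general one C hInf hSup hM hO hR hP d hchain hmax
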